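/- Sup-norm approximation of a Lipschitz kernel by its empirical block version: Let f : [0,1]² → ℝ be symmetric and Lipschitz with constant L, let U₁, …, Uₙ be i.i.d. Uniform[0,1] with order statistics U_(1) ≤ ⋯ ≤ U_(n), and define fₙ(x,y) = f(U_(i), U_(j)) for (x,y) in the block ((i−1)/n, i/n] × ((j−1)/n, j/n]. Then with probability at least 1 − 4n·exp(−(1/6)(log n)²), we have sup_{x,y ∈ [0,1]} |f(x,y) − fₙ(x,y)| ≤ √2 · L · (log n)/√n. -/

import Mathlib

/-!
Let `U_(i)` denote the order statistics. Since `U_(i) < t` forces at least `i` of the `U_j` below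
`t`, and `U_(i) > t` forces at least `n - i + 1` of them above `t`, Hoeffding's inequality for the
binomial counts `#{j | U_j < t}` and `#{j | U_j > t}` shows that `U_(i)` leaves
`[i/n - δ, (i-1)/n + δ]` with probability at most `2 exp(-2nδ²)`. For `δ = log n / √n` a union bound
over the `n` order statistics leaves probability at most `2n exp(-2 (log n)²)` for the bad event.
Off it, every point of the `i`-th block lies within `δ` of `U_(i)`, so the Lipschitz bound gives
`|f - fₙ| ≤ L √(δ² + δ²) = √2 L δ`.
-/

open MeasureTheory ProbabilityTheory Set Finset Real

namespace Tuple

variable {α : Type*} [LinearOrder α] {n : ℕ} (v : Fin n → α) (i : Fin n) {S : Set α}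
  [DecidablePred (· ∈ S)]

theorem succ_le_card_filter_of_isLowerSet (hS : IsLowerSet S) (h : v (sort v i) ∈ S) :
    (i : ℕ) + 1 ≤ #{j | v j ∈ S} := by
  rw [← Fin.card_Iic]
  refine card_le_card_of_injOn (sort v) (fun k hk => ?_) (sort v).injective.injOn
  simpa using hS (monotone_sort v (mem_Iic.1 hk)) h

theorem sub_le_card_filter_of_isUpperSet (hS : IsUpperSet S) (h : v (sort v i) ∈ S) :
    n - i ≤ #{j | v j ∈ S} := by
  rw [← Fin.card_Ici]
  refine card_le_card_of_injOn (sort v) (fun k hk => ?_) (sort v).injective.injOn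
  simpa using hS (monotone_sort v (mem_Ici.1 hk)) h

end Tuple

open scoped Classical in
theorem measure_card_filter_mem_ge_le {Ω ι β : Type*} [MeasurableSpace Ω] [MeasurableSpace β]
    {P : Measure Ω} [IsProbabilityMeasure P] [Fintype ι] {Y : ι → Ω → β}
    (hY : ∀ j, Measurable (Y j)) (hindep : iIndepFun Y P) {S : Set β} (hS : MeasurableSet S)
    {p δ : ℝ} (hp : ∀ j, P.real (Y j ⁻¹' S) ≤ p) (hδ : 0 ≤ δ) :
    P {ω | Fintype.card ι * (p + δ) ≤ #{j | Y j ω ∈ S}} ≤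
      ENNReal.ofReal (exp (-2 * Fintype.card ι * δ ^ 2)) := by
  set X : ι → Ω → ℝ := fun j => (Y j ⁻¹' S).indicator 1
  have hX_meas : ∀ j, Measurable (X j) := fun j => measurable_one.indicator (hY j hS)
  have hX_mean : ∀ j, ∫ ω, X j ω ∂P = P.real (Y j ⁻¹' S) := fun j =>
    integral_indicator_one (hY j hS)
  have hX_sum : ∀ ω, ∑ j, X j ω = #{j | Y j ω ∈ S} := fun ω => by
    simp only [X, indicator_apply, Set.mem_preimage, Pi.one_apply, sum_boole]
  have hsubG : ∀ j ∈ (univ : Finset ι), HasSubgaussianMGF (fun ω => X j ω - ∫ ω, X j ω ∂P)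
      ((‖(1 : ℝ) - 0‖₊ / 2) ^ 2) P := fun j _ =>
    hasSubgaussianMGF_of_mem_Icc (hX_meas j).aemeasurable (ae_of_all _ fun ω => by
      by_cases h : ω ∈ Y j ⁻¹' S <;> simp [X, h])
  have hindep' : iIndepFun (fun j ω => X j ω - ∫ ω, X j ω ∂P) P :=
    hindep.comp (fun j y => S.indicator 1 y - ∫ ω, X j ω ∂P)
      (fun j => (measurable_one.indicator hS).sub_const _)
  have hmean_le : ∑ j, ∫ ω, X j ω ∂P ≤ Fintype.card ι * p := by
    simpa [hX_mean] using Finset.sum_le_sum fun j (_ : j ∈ Finset.univ) => hp j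
  have hexponent : -(Fintype.card ι * δ) ^ 2 / (2 * (Fintype.card ι * (1 / 2) ^ 2) : ℝ) =
      -2 * Fintype.card ι * δ ^ 2 := by
    rcases eq_or_ne (Fintype.card ι : ℝ) 0 with h | h
    · simp [h]
    · field_simp
  have hoeffding := HasSubgaussianMGF.measure_sum_ge_le_of_iIndepFun hindep' hsubG
    (mul_nonneg (Nat.cast_nonneg (Fintype.card ι)) hδ)
  simp only [sum_sub_distrib, sum_const, card_univ, nsmul_eq_mul, nnnorm_one, sub_zero] at hoeffding
  push_cast at hoeffding
  calc P {ω | Fintype.card ι * (p + δ) ≤ #{j | Y j ω ∈ S}}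
      ≤ P {ω | Fintype.card ι * δ ≤ ∑ j, X j ω - ∑ j, ∫ ω, X j ω ∂P} :=
        measure_mono fun ω hω => by
          simp only [mem_ofPred_eq, hX_sum] at hω ⊢
          linarith
    _ ≤ ENNReal.ofReal (exp (-2 * Fintype.card ι * δ ^ 2)) := by
      rw [← ofReal_measureReal]
      exact ENNReal.ofReal_le_ofReal (hoeffding.trans_eq (by rw [hexponent]))

section Uniform

variable {Ω : Type*} [MeasurableSpace Ω] {P : Measure Ω} {Y : Ω → ℝ}

theorem measure_preimage_Iio_le_of_map_eq (hY : Measurable Y)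
    (hunif : P.map Y = volume.restrict (Icc 0 1)) (t : ℝ) :
    P (Y ⁻¹' Iio t) ≤ ENNReal.ofReal t := by
  rw [← Measure.map_apply hY measurableSet_Iio, hunif, Measure.restrict_apply measurableSet_Iio]
  calc volume (Iio t ∩ Icc 0 1) ≤ volume (Ico 0 t) := measure_mono fun x hx => ⟨hx.2.1, hx.1⟩
    _ = ENNReal.ofReal t := by rw [volume_Ico, sub_zero]

theorem measure_preimage_Ioi_le_of_map_eq (hY : Measurable Y)
    (hunif : P.map Y = volume.restrict (Icc 0 1)) (t : ℝ) :
    P (Y ⁻¹' Ioi t) ≤ ENNReal.ofReal (1 - t) := by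
  rw [← Measure.map_apply hY measurableSet_Ioi, hunif, Measure.restrict_apply measurableSet_Ioi]
  calc volume (Ioi t ∩ Icc 0 1) ≤ volume (Ioc t 1) := measure_mono fun x hx => ⟨hx.1, hx.2.2⟩
    _ = ENNReal.ofReal (1 - t) := volume_Ioc

end Uniform

theorem ofReal_one_sub_le_measure_compl {Ω : Type*} [MeasurableSpace Ω] {P : Measure Ω}
    [IsProbabilityMeasure P] {s : Set Ω} {b : ℝ} (hb : 0 ≤ b) (h : P s ≤ ENNReal.ofReal b) :
    ENNReal.ofReal (1 - b) ≤ P sᶜ := by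
  rw [ENNReal.ofReal_sub _ hb, ENNReal.ofReal_one, tsub_le_iff_right]
  calc 1 = P univ := measure_univ.symm
    _ ≤ P s + P sᶜ := measure_univ_le_add_compl s
    _ ≤ P sᶜ + ENNReal.ofReal b := by rw [add_comm]; gcongr

theorem abs_sub_le_sqrt_two_mul_of_abs_sub_le {f : ℝ → ℝ → ℝ} {L : ℝ}
    (hlip : ∀ x x' y y' : ℝ, |f x y - f x' y'| ≤ L * √((x - x') ^ 2 + (y - y') ^ 2))
    {x x' y y' δ : ℝ} (hx : |x - x'| ≤ δ) (hy : |y - y'| ≤ δ) :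
    |f x y - f x' y'| ≤ √2 * L * δ := by
  have hL : 0 ≤ L := by simpa using (abs_nonneg _).trans (hlip 1 0 0 0)
  have hδ : 0 ≤ δ := (abs_nonneg _).trans hx
  have hx2 := pow_le_pow_left₀ (abs_nonneg _) hx 2
  have hy2 := pow_le_pow_left₀ (abs_nonneg _) hy 2
  rw [sq_abs] at hx2 hy2
  calc |f x y - f x' y'| ≤ L * √((x - x') ^ 2 + (y - y') ^ 2) := hlip _ _ _ _
    _ ≤ L * √(2 * δ ^ 2) := by gcongr; linarith
    _ = √2 * L * δ := by rw [sqrt_mul zero_le_two, sqrt_sq hδ]; ring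

section OrderStatistic

variable {Ω : Type*} [MeasurableSpace Ω] {P : Measure Ω} {n : ℕ}

/-- `orderStatistic U i` is `U_(i+1)`: the index `i : Fin n` is zero-based. -/
noncomputable def orderStatistic (U : Fin n → Ω → ℝ) (i : Fin n) (ω : Ω) : ℝ :=
  U (Tuple.sort (fun a => U a ω) i) ω

variable {U : Fin n → Ω → ℝ}

theorem measure_orderStatistic_mem_eq_zero {S : Set ℝ} (h : ∀ j, P (U j ⁻¹' S) = 0) (i : Fin n) :
    P {ω | orderStatistic U i ω ∈ S} = 0 :=
  measure_mono_null (fun ω hω => mem_iUnion.2 ⟨Tuple.sort (fun a => U a ω) i, hω⟩)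
    (measure_iUnion_null h)

variable [IsProbabilityMeasure P] (hmeas : ∀ j, Measurable (U j)) (hindep : iIndepFun U P)
include hmeas hindep

theorem measure_orderStatistic_lt_le (i : Fin n) {t p δ : ℝ}
    (hp : ∀ j, P.real (U j ⁻¹' Iio t) ≤ p) (hδ : 0 ≤ δ) (hi : n * (p + δ) ≤ i + 1) :
    P {ω | orderStatistic U i ω < t} ≤ ENNReal.ofReal (exp (-2 * n * δ ^ 2)) := by
  classical
  have hoeffding := measure_card_filter_mem_ge_le hmeas hindep measurableSet_Iio hp hδ
  rw [Fintype.card_fin] at hoeffding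
  refine (measure_mono fun ω hω => ?_).trans hoeffding
  have := Tuple.succ_le_card_filter_of_isLowerSet (fun a => U a ω) i (isLowerSet_Iio t) hω
  exact hi.trans (by exact_mod_cast this)

theorem measure_lt_orderStatistic_le (i : Fin n) {t p δ : ℝ}
    (hp : ∀ j, P.real (U j ⁻¹' Ioi t) ≤ p) (hδ : 0 ≤ δ) (hi : n * (p + δ) ≤ n - i) :
    P {ω | t < orderStatistic U i ω} ≤ ENNReal.ofReal (exp (-2 * n * δ ^ 2)) := by
  classical
  have hoeffding := measure_card_filter_mem_ge_le hmeas hindep measurableSet_Ioi hp hδ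
  rw [Fintype.card_fin] at hoeffding
  refine (measure_mono fun ω hω => ?_).trans hoeffding
  have := Tuple.sub_le_card_filter_of_isUpperSet (fun a => U a ω) i (isUpperSet_Ioi t) hω
  rw [← Nat.cast_sub i.is_lt.le] at hi
  exact hi.trans (by exact_mod_cast this)

variable (hunif : ∀ j, P.map (U j) = volume.restrict (Icc 0 1))
include hunif

theorem measure_orderStatistic_lt_sub_le (i : Fin n) {δ : ℝ} (hδ : 0 ≤ δ) :
    P {ω | orderStatistic U i ω < (i + 1) / n - δ} ≤ ENNReal.ofReal (exp (-2 * n * δ ^ 2)) := by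
  set t : ℝ := (i + 1) / n - δ
  have hmarginal j := measure_preimage_Iio_le_of_map_eq (hmeas j) (hunif j) t
  rcases le_or_gt t 0 with ht | ht
  · have hnull j : P (U j ⁻¹' Iio t) = 0 :=
      nonpos_iff_eq_zero.1 ((hmarginal j).trans_eq (ENNReal.ofReal_eq_zero.2 ht))
    exact (measure_orderStatistic_mem_eq_zero hnull i).trans_le zero_le
  · refine measure_orderStatistic_lt_le hmeas hindep i
      (fun j => ENNReal.toReal_le_of_le_ofReal ht.le (hmarginal j)) hδ ?_
    have hn : (0 : ℝ) < n := Nat.cast_pos.2 i.pos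
    simp only [t]
    field_simp
    linarith

theorem measure_add_lt_orderStatistic_le (i : Fin n) {δ : ℝ} (hδ : 0 ≤ δ) :
    P {ω | i / n + δ < orderStatistic U i ω} ≤ ENNReal.ofReal (exp (-2 * n * δ ^ 2)) := by
  set t : ℝ := i / n + δ
  have hmarginal j := measure_preimage_Ioi_le_of_map_eq (hmeas j) (hunif j) t
  rcases le_or_gt 1 t with ht | ht
  · have hnull j : P (U j ⁻¹' Ioi t) = 0 :=
      nonpos_iff_eq_zero.1 ((hmarginal j).trans_eq (ENNReal.ofReal_eq_zero.2 (by linarith)))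
    exact (measure_orderStatistic_mem_eq_zero hnull i).trans_le zero_le
  · refine measure_lt_orderStatistic_le hmeas hindep i
      (fun j => ENNReal.toReal_le_of_le_ofReal (by linarith) (hmarginal j)) hδ ?_
    have hn : (0 : ℝ) < n := Nat.cast_pos.2 i.pos
    simp only [t]
    field_simp
    linarith

theorem measure_exists_orderStatistic_not_mem_Icc_le {δ : ℝ} (hδ : 0 ≤ δ) :
    P {ω | ∃ i : Fin n, orderStatistic U i ω ∉ Icc ((i + 1) / n - δ) (i / n + δ)} ≤
      ENNReal.ofReal (2 * n * exp (-2 * n * δ ^ 2)) := by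
  have hcover : {ω | ∃ i : Fin n, orderStatistic U i ω ∉ Icc ((i + 1) / n - δ) (i / n + δ)} ⊆
      ⋃ i : Fin n, ({ω | orderStatistic U i ω < (i + 1) / n - δ} ∪
        {ω | i / n + δ < orderStatistic U i ω}) := fun ω ⟨i, hi⟩ =>
    mem_iUnion.2 ⟨i, by rw [Set.mem_Icc, not_and_or, not_le, not_le] at hi; exact hi⟩
  calc _ ≤ ∑ i : Fin n, (P {ω | orderStatistic U i ω < (i + 1) / n - δ} +
        P {ω | i / n + δ < orderStatistic U i ω}) :=
        (measure_mono hcover).trans <| (measure_iUnion_fintype_le _ _).trans <|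
          Finset.sum_le_sum fun i _ => measure_union_le _ _
    _ ≤ ∑ _i : Fin n, 2 * ENNReal.ofReal (exp (-2 * n * δ ^ 2)) :=
        Finset.sum_le_sum fun i _ => two_mul (ENNReal.ofReal _) ▸
          add_le_add (measure_orderStatistic_lt_sub_le hmeas hindep hunif i hδ)
            (measure_add_lt_orderStatistic_le hmeas hindep hunif i hδ)
    _ = ENNReal.ofReal (2 * n * exp (-2 * n * δ ^ 2)) := by
      rw [sum_const, card_univ, Fintype.card_fin, nsmul_eq_mul, ENNReal.ofReal_mul (by positivity),
        ENNReal.ofReal_mul zero_le_two, ENNReal.ofReal_natCast, ENNReal.ofReal_ofNat]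
      ring

end OrderStatistic

theorem block_kernel_sup_approx_general
    {Ω : Type*} [MeasurableSpace Ω] (P : Measure Ω) [IsProbabilityMeasure P]
    (n : ℕ) (f : ℝ → ℝ → ℝ) (L : ℝ)
    (hlip : ∀ x x' y y' : ℝ, |f x y - f x' y'| ≤ L * Real.sqrt ((x - x')^2 + (y - y')^2))
    (U : Fin n → Ω → ℝ)
    (hmeas : ∀ i, Measurable (U i))
    (hindep : iIndepFun U P)
    (hunif : ∀ i, P.map (U i) = volume.restrict (Icc (0:ℝ) 1)) :
    ENNReal.ofReal (1 - 4 * n * Real.exp (-(1/6) * (Real.log n)^2)) ≤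
      P {ω | ∀ i j : Fin n,
        ∀ x ∈ Ioc ((i : ℝ) / n) (((i : ℕ) + 1) / n),
        ∀ y ∈ Ioc ((j : ℝ) / n) (((j : ℕ) + 1) / n),
          |f x y -
            f (((fun a => U a ω) ∘ Tuple.sort (fun a => U a ω)) i)
              (((fun a => U a ω) ∘ Tuple.sort (fun a => U a ω)) j)|
            ≤ Real.sqrt 2 * L * Real.log n / Real.sqrt n} := by
  set δ := log n / √n
  have hδ : 0 ≤ δ := div_nonneg (log_natCast_nonneg n) (sqrt_nonneg _)
  have hnδ : n * δ ^ 2 = log n ^ 2 := by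
    rcases n.eq_zero_or_pos with rfl | hn
    · simp
    · rw [div_pow, sq_sqrt n.cast_nonneg]
      field_simp
  have hprob : 2 * n * exp (-2 * n * δ ^ 2) ≤ 4 * n * exp (-(1 / 6) * log n ^ 2) := by
    rw [mul_assoc (-2 : ℝ), hnδ]
    gcongr <;> nlinarith [sq_nonneg (log n)]
  refine (ofReal_one_sub_le_measure_compl (by positivity)
    ((measure_exists_orderStatistic_not_mem_Icc_le hmeas hindep hunif hδ).trans
      (ENNReal.ofReal_le_ofReal hprob))).trans (measure_mono fun ω hω i j x hx y hy => ?_)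
  simp only [mem_compl_iff, mem_ofPred_eq, not_exists, not_not] at hω
  have hclose (k : Fin n) (z : ℝ) (hz : z ∈ Ioc ((k : ℝ) / n) ((k + 1) / n)) :
      |z - orderStatistic U k ω| ≤ δ :=
    abs_sub_le_iff.2 ⟨by linarith [hz.2, (hω k).1], by linarith [hz.1, (hω k).2]⟩
  calc _ ≤ √2 * L * δ := abs_sub_le_sqrt_two_mul_of_abs_sub_le hlip (hclose i x hx) (hclose j y hy)
    _ = _ := mul_div_assoc _ _ _ |>.symm

/-- Sup-norm approximation of a Lipschitz kernel by its empirical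
block version: let `f : [0,1]² → ℝ` be symmetric and Lipschitz with constant `L`, and
let `U₁, …, Uₙ` be i.i.d. Uniform[0,1] with order statistics `U_(1) ≤ ⋯ ≤ U_(n)`
(given by `Tuple.sort`).  The block kernel `fₙ` takes the value `f(U_(i), U_(j))` on
the block `((i-1)/n, i/n] × ((j-1)/n, j/n]`.  Then with probability at least
`1 - 4 n exp(-(1/6)(log n)²)`, the uniform distance between `f` and `fₙ` over the
blocks is at most `√2 · L · (log n)/√n`. -/
theorem block_kernel_sup_approx
    {Ω : Type*} [MeasurableSpace Ω] (P : Measure Ω) [IsProbabilityMeasure P]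
    (n : ℕ) (hn : 0 < n) (f : ℝ → ℝ → ℝ) (L : ℝ)
    (hsym : ∀ x y, f x y = f y x)
    (hlip : ∀ x x' y y' : ℝ, |f x y - f x' y'| ≤ L * Real.sqrt ((x - x')^2 + (y - y')^2))
    (U : Fin n → Ω → ℝ)
    (hmeas : ∀ i, Measurable (U i))
    (hindep : iIndepFun U P)
    (hunif : ∀ i, P.map (U i) = volume.restrict (Icc (0:ℝ) 1)) :
    ENNReal.ofReal (1 - 4 * n * Real.exp (-(1/6) * (Real.log n)^2)) ≤
      P {ω | ∀ i j : Fin n,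
        ∀ x ∈ Ioc ((i : ℝ) / n) (((i : ℕ) + 1) / n),
        ∀ y ∈ Ioc ((j : ℝ) / n) (((j : ℕ) + 1) / n),
          |f x y -
            f (((fun a => U a ω) ∘ Tuple.sort (fun a => U a ω)) i)
              (((fun a => U a ω) ∘ Tuple.sort (fun a => U a ω)) j)|
            ≤ Real.sqrt 2 * L * Real.log n / Real.sqrt n} :=
  block_kernel_sup_approx_general P n f L hlip U hmeas hindep hunif
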